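/- Trail condition for δ-separation: let G = (V,E) be a directed graph and A, B, C ⊆ V pairwise disjoint. Then C δ-separates A from B in G (A ir_δ B | C) if and only if every allowed trail from A to B in G is blocked by C. -/

import Mathlib

open Set

variable {V : Type*}

/-- There is a directed path (a sequence of ≥ 2 distinct vertices joined by
directed edges) from `v` to `w`; i.e. `v` is an ancestor of `w`. -/
def DirPathConn (E : V → V → Prop) (v w : V) : Prop :=
  ∃ l : List V, l.Chain' E ∧ l.Nodup ∧ 2 ≤ l.length ∧
    l.head? = some v ∧ l.getLast? = some w

/-- `an(A)`: vertices outside `A` that are ancestors of some element of `A`. -/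
def anSet (E : V → V → Prop) (A : Set V) : Set V :=
  {v | v ∉ A ∧ ∃ a ∈ A, DirPathConn E v a}

/-- `An(A) = A ∪ an(A)`, the smallest ancestral set containing `A`. -/
def AnSet (E : V → V → Prop) (A : Set V) : Set V := A ∪ anSet E A

/-- `pa(A)`: parents of `A` outside of `A`. -/
def paSet (E : V → V → Prop) (A : Set V) : Set V :=
  {v | v ∉ A ∧ ∃ a ∈ A, E v a}

/-- `cl(A) = A ∪ pa(A)`, the closure of `A`. -/
def clSet (E : V → V → Prop) (A : Set V) : Set V := A ∪ paSet E A

/-- The induced subgraph `G_A` (as an edge relation on `V` supported on `A`). -/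
def inducedGraph (E : V → V → Prop) (A : Set V) : V → V → Prop :=
  fun j k => E j k ∧ j ∈ A ∧ k ∈ A

/-- `G^B`: delete from `G` every directed edge starting in `B`. -/
def delOut (E : V → V → Prop) (B : Set V) : V → V → Prop :=
  fun j k => E j k ∧ j ∉ B

/-- The moral graph `G^m`: distinct `j, k` are adjacent iff they are joined by
an edge in some direction or have a common child. -/
def moralGraph (E : V → V → Prop) : V → V → Prop :=
  fun j k => j ≠ k ∧ (E j k ∨ E k j ∨ ∃ c, E j c ∧ E k c)

/-- `l` is an undirected path from `v` to `w` in the undirected graph `H`: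
a sequence of ≥ 2 distinct vertices, consecutive ones adjacent. -/
def IsUPath (H : V → V → Prop) (l : List V) (v w : V) : Prop :=
  l.Chain' H ∧ l.Nodup ∧ 2 ≤ l.length ∧
    l.head? = some v ∧ l.getLast? = some w

/-- `A ⊥_g B | C` in the undirected graph `H`: every path from a vertex of `A`
to a vertex of `B` contains a vertex of `C`. -/
def uSep (H : V → V → Prop) (A B C : Set V) : Prop :=
  ∀ v ∈ A, ∀ w ∈ B, ∀ l : List V, IsUPath H l v w → ∃ c ∈ C, c ∈ l

/-- δ-separation for pairwise disjoint `A, B, C`: `A ⊥_g B | C` in the moral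
graph of the subgraph of `G^B` induced by `An(A ∪ B ∪ C)`. -/
def deltaSepDisjoint (E : V → V → Prop) (A B C : Set V) : Prop :=
  uSep (moralGraph (inducedGraph (delOut E B) (AnSet E (A ∪ B ∪ C)))) A B C

/-- δ-separation `A ir_δ B | C` for general (not necessarily disjoint) sets:
`C \ B` δ-separates `A \ (B ∪ C)` from `B`. -/
def deltaSep (E : V → V → Prop) (A B C : Set V) : Prop :=
  deltaSepDisjoint E (A \ (B ∪ C)) B (C \ B)

/-- `(n, j, d)` is a trail in `G`: a sequence `j 0, …, j n` of distinct
vertices (`n ≥ 1`) together with, for each `i < n`, an edge between `j i` and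
`j (i+1)` whose direction is recorded by `d i` (`true` means the edge is
`(j i, j (i+1))`, `false` means it is `(j (i+1), j i)`). -/
def IsTrail (E : V → V → Prop) (n : ℕ) (j : ℕ → V) (d : ℕ → Bool) : Prop :=
  1 ≤ n ∧ (∀ a ≤ n, ∀ b ≤ n, j a = j b → a = b) ∧
    ∀ i < n, (d i = true → E (j i) (j (i + 1))) ∧
      (d i = false → E (j (i + 1)) (j i))

/-- The edges of the trail meet head-to-head at the intermediate vertex with
index `i`, i.e. `e_i = (j_{i-1}, j_i)` and `e_{i+1} = (j_{i+1}, j_i)`. -/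
def HeadToHead (d : ℕ → Bool) (i : ℕ) : Prop :=
  d (i - 1) = true ∧ d i = false

/-- The trail `(n, j, d)` is blocked by `C`: it has an intermediate vertex
`j i` such that either the edges do not meet head-to-head at `j i` and
`j i ∈ C`, or they meet head-to-head at `j i` and neither `j i` nor any of its
descendants belongs to `C`. -/
def TrailBlocked (E : V → V → Prop) (n : ℕ) (j : ℕ → V) (d : ℕ → Bool)
    (C : Set V) : Prop :=
  ∃ i, 0 < i ∧ i < n ∧
    ((¬ HeadToHead d i ∧ j i ∈ C) ∨
      (HeadToHead d i ∧ j i ∉ C ∧ ∀ w, DirPathConn E (j i) w → w ∉ C))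

/-- The trail `(n, j, d)` is allowed (w.r.t. `B`): it contains no edge of the
form `(b, k)` with `b ∈ B` and `k ∉ B`. -/
def TrailAllowed (B : Set V) (n : ℕ) (j : ℕ → V) (d : ℕ → Bool) : Prop :=
  ∀ i < n, (d i = true → ¬ (j i ∈ B ∧ j (i + 1) ∉ B)) ∧
    (d i = false → ¬ (j (i + 1) ∈ B ∧ j i ∉ B))

/-!
Both sides are equivalent to the absence of a walk from `A` to `B` in `G^B` whose colliders lie
in `An(C)` and whose other intermediate vertices lie outside `C`.

Such a walk gives a `C`-avoiding path in the moral graph of `G^B` restricted to `An(A ∪ B ∪ C)`: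
each vertex of the walk is an ancestor of an endpoint or of a collider, and the two neighbours of
a collider in `C` are married. Conversely, a `C`-avoiding moral path unfolds into a walk whose
colliders lie in `An(A ∪ B ∪ C)`; a collider that is not in `An(C)` has a directed path to `A` or
to `B`, along which the walk is rerouted.

On the trail side, an allowed trail cut at its first vertex in `B` is such a walk, and a walk
becomes a trail by cutting out closed subwalks.
-/

open Relation

section Paths

variable {R : V → V → Prop} {u v w : V}

theorem dirPathConn_of_rel (h : R v w) (hne : v ≠ w) : DirPathConn R v w :=
  ⟨[v, w], List.isChain_pair.2 h, by simpa using hne, le_rfl, rfl, rfl⟩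

theorem DirPathConn.head (h : R u v) (hvw : DirPathConn R v w) (huw : u ≠ w) :
    DirPathConn R u w := by
  obtain ⟨l, hc, hnd, hlen, hhd, hlast⟩ := hvw
  by_cases hu : u ∈ l
  · obtain ⟨s, t, rfl⟩ := List.append_of_mem hu
    have ht : t ≠ [] := by
      rintro rfl
      simp at hlast
      exact huw hlast
    refine ⟨u :: t, hc.right_of_append, hnd.sublist (List.sublist_append_right _ _), ?_, rfl, ?_⟩
    · simpa [Nat.succ_le_succ_iff, Nat.one_le_iff_ne_zero] using ht
    · simpa [List.getLast?_append, ht] using hlast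
  · obtain ⟨a, l, rfl⟩ := List.exists_cons_of_ne_nil (l := l) (by rintro rfl; simp at hlen)
    obtain rfl : v = a := by simpa using hhd.symm
    exact ⟨u :: v :: l, List.isChain_cons_cons.2 ⟨h, hc⟩, List.nodup_cons.2 ⟨hu, hnd⟩,
      by simp, rfl, by simpa using hlast⟩

theorem dirPathConn_iff_transGen : DirPathConn R v w ↔ TransGen R v w ∧ v ≠ w := by
  constructor
  · rintro ⟨l, hc, hnd, hlen, hhd, hlast⟩
    obtain ⟨a, l, rfl⟩ := List.exists_cons_of_ne_nil (l := l) (by rintro rfl; simp at hlen)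
    obtain rfl : v = a := by simpa using hhd.symm
    have hw : (v :: l).getLast (List.cons_ne_nil _ _) = w := by
      simpa [List.getLast?_eq_some_getLast] using hlast
    have hne : v ≠ w := by
      have hl : l ≠ [] := List.ne_nil_of_length_pos (by simp at hlen; omega)
      rw [List.getLast_cons hl] at hw
      exact fun hvw => (List.nodup_cons.1 hnd).1 (hvw ▸ hw ▸ List.getLast_mem hl)
    exact ⟨(reflTransGen_iff_eq_or_transGen.1
      (List.relationReflTransGen_of_exists_isChain_cons l hc hw)).resolve_left hne.symm, hne⟩
  · rintro ⟨h, hne⟩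
    induction h using TransGen.head_induction_on with
    | single h => exact dirPathConn_of_rel h hne
    | @head u x hux _ ih =>
      by_cases hxw : x = w
      · exact dirPathConn_of_rel (hxw ▸ hux) hne
      · exact (ih hxw).head hux hne

theorem mem_of_reflTransGen {P : Set V} (hP : ∀ ⦃u v⦄, R u v → v ∈ P → u ∈ P)
    (h : ReflTransGen R u v) (hv : v ∈ P) : u ∈ P := by
  induction h using ReflTransGen.head_induction_on with
  | refl => exact hv
  | head huw _ ih => exact hP huw ih

end Paths

section Ancestors

variable {E : V → V → Prop} {S T : Set V} {u v : V}

theorem mem_AnSet_iff : v ∈ AnSet E S ↔ ∃ s ∈ S, ReflTransGen E v s := by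
  constructor
  · rintro (hv | ⟨-, s, hs, hp⟩)
    · exact ⟨v, hv, .refl⟩
    · exact ⟨s, hs, (dirPathConn_iff_transGen.1 hp).1.to_reflTransGen⟩
  · rintro ⟨s, hs, h⟩
    by_cases hv : v ∈ S
    · exact Or.inl hv
    · rcases reflTransGen_iff_eq_or_transGen.1 h with rfl | h
      · exact absurd hs hv
      · exact Or.inr ⟨hv, s, hs, dirPathConn_iff_transGen.2 ⟨h, fun h => hv (h ▸ hs)⟩⟩

theorem subset_AnSet : S ⊆ AnSet E S := subset_union_left

theorem AnSet_mono (h : S ⊆ T) : AnSet E S ⊆ AnSet E T := fun _ hv =>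
  let ⟨s, hs, hp⟩ := mem_AnSet_iff.1 hv
  mem_AnSet_iff.2 ⟨s, h hs, hp⟩

theorem mem_AnSet_of_reflTransGen (h : ReflTransGen E u v) (hv : v ∈ AnSet E S) :
    u ∈ AnSet E S :=
  let ⟨s, hs, hp⟩ := mem_AnSet_iff.1 hv
  mem_AnSet_iff.2 ⟨s, hs, h.trans hp⟩

theorem mem_AnSet_of_rel (h : E u v) (hv : v ∈ AnSet E S) : u ∈ AnSet E S :=
  mem_AnSet_of_reflTransGen (.single h) hv

theorem exists_reflTransGen_delOut (hv : v ∈ AnSet E S) :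
    ∃ s ∈ S, ReflTransGen (delOut E S) v s := by
  obtain ⟨s, hs, h⟩ := mem_AnSet_iff.1 hv
  clear hv
  induction h using ReflTransGen.head_induction_on with
  | refl => exact ⟨_, hs, .refl⟩
  | @head u w huw _ ih =>
    by_cases hu : u ∈ S
    · exact ⟨u, hu, .refl⟩
    · obtain ⟨t, ht, hp⟩ := ih
      exact ⟨t, ht, .head ⟨huw, hu⟩ hp⟩

end Ancestors

def IsWalk (R : V → V → Prop) (n : ℕ) (j : ℕ → V) (d : ℕ → Bool) : Prop :=
  ∀ i < n, (d i = true → R (j i) (j (i + 1))) ∧ (d i = false → R (j (i + 1)) (j i))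

/-- With `P = An(C)` and `Q = C`, these are the walks that `C` does not block. -/
structure IsOpenWalk (R : V → V → Prop) (P Q : Set V) (n : ℕ) (j : ℕ → V) (d : ℕ → Bool) :
    Prop where
  isWalk : IsWalk R n j d
  collider : ∀ i, 0 < i → i < n → HeadToHead d i → j i ∈ P
  nonCollider : ∀ i, 0 < i → i < n → ¬ HeadToHead d i → j i ∉ Q

def seqAppend {α : Type*} (m : ℕ) (f g : ℕ → α) : ℕ → α :=
  fun t => if t < m then f t else g (t - m)

section SeqAppend

variable {α : Type*} {m t : ℕ} {f g : ℕ → α}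

theorem seqAppend_of_lt (h : t < m) : seqAppend m f g t = f t := if_pos h

theorem seqAppend_of_le (h : m ≤ t) : seqAppend m f g t = g (t - m) := if_neg (by omega)

theorem seqAppend_of_le_of_eq (hfg : f m = g 0) (h : t ≤ m) : seqAppend m f g t = f t := by
  rcases h.lt_or_eq with h | rfl
  · exact seqAppend_of_lt h
  · rw [seqAppend_of_le le_rfl, Nat.sub_self, hfg]

theorem seqAppend_const (a : α) : seqAppend m (fun _ => a) (fun _ => a) = fun _ => a :=
  funext fun _ => ite_self a

variable {i : ℕ} {d e : ℕ → Bool}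

theorem headToHead_seqAppend_of_lt (h0 : 0 < i) (h : i < m) :
    HeadToHead (seqAppend m d e) i ↔ HeadToHead d i := by
  simp only [HeadToHead, seqAppend_of_lt h, seqAppend_of_lt (show i - 1 < m by omega)]

theorem headToHead_seqAppend_self (h : 0 < m) :
    HeadToHead (seqAppend m d e) m ↔ d (m - 1) = true ∧ e 0 = false := by
  simp only [HeadToHead, seqAppend_of_lt (show m - 1 < m by omega), seqAppend_of_le le_rfl,
    Nat.sub_self]

theorem headToHead_seqAppend_of_gt (h : m < i) :
    HeadToHead (seqAppend m d e) i ↔ HeadToHead e (i - m) := by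
  simp only [HeadToHead, seqAppend_of_le h.le, seqAppend_of_le (show m ≤ i - 1 by omega),
    show i - 1 - m = i - m - 1 by omega]

theorem headToHead_shift {p : ℕ} (h : 0 < i) :
    HeadToHead (fun t => d (t + p)) i ↔ HeadToHead d (i + p) := by
  simp only [HeadToHead, show i - 1 + p = i + p - 1 by omega]

end SeqAppend

namespace IsOpenWalk

variable {R R' : V → V → Prop} {P P' Q Q' : Set V} {n m : ℕ} {j j' : ℕ → V} {d d' : ℕ → Bool}

theorem mono (hw : IsOpenWalk R P Q n j d) (hR : ∀ u v, R u v → R' u v) (hP : P ⊆ P')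
    (hQ : Q' ⊆ Q) : IsOpenWalk R' P' Q' n j d where
  isWalk i hi := ⟨fun h => hR _ _ ((hw.isWalk i hi).1 h), fun h => hR _ _ ((hw.isWalk i hi).2 h)⟩
  collider i h0 hi hth := hP (hw.collider i h0 hi hth)
  nonCollider i h0 hi hth hQ' := hw.nonCollider i h0 hi hth (hQ hQ')

theorem take (hw : IsOpenWalk R P Q n j d) (hm : m ≤ n) : IsOpenWalk R P Q m j d where
  isWalk i hi := hw.isWalk i (by omega)
  collider i h0 hi := hw.collider i h0 (by omega)
  nonCollider i h0 hi := hw.nonCollider i h0 (by omega)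

theorem shift (hw : IsOpenWalk R P Q n j d) (p : ℕ) :
    IsOpenWalk R P Q (n - p) (fun t => j (t + p)) (fun t => d (t + p)) where
  isWalk i hi := by simpa only [Nat.add_right_comm i 1 p] using hw.isWalk (i + p) (by omega)
  collider i h0 hi hth := hw.collider (i + p) (by omega) (by omega) ((headToHead_shift h0).1 hth)
  nonCollider i h0 hi hth :=
    hw.nonCollider (i + p) (by omega) (by omega) (mt (headToHead_shift h0).2 hth)

theorem append (hw : IsOpenWalk R P Q m j d) (hw' : IsOpenWalk R P Q n j' d') (hj : j m = j' 0)
    (hjunction : 0 < m → 0 < n →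
      (d (m - 1) = true ∧ d' 0 = false → j m ∈ P) ∧
      (¬ (d (m - 1) = true ∧ d' 0 = false) → j m ∉ Q)) :
    IsOpenWalk R P Q (m + n) (seqAppend m j j') (seqAppend m d d') := by
  refine ⟨fun i hi => ?_, fun i h0 hi hth => ?_, fun i h0 hi hth => ?_⟩
  · rcases Nat.lt_or_ge i m with h | h
    · rw [seqAppend_of_lt h, seqAppend_of_le_of_eq hj h.le, seqAppend_of_le_of_eq hj h]
      exact hw.isWalk i h
    · rw [seqAppend_of_le h, seqAppend_of_le h, seqAppend_of_le (by omega),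
        show i + 1 - m = i - m + 1 by omega]
      exact hw'.isWalk (i - m) (by omega)
  · rcases lt_trichotomy i m with h | rfl | h
    · rw [seqAppend_of_lt h]
      exact hw.collider i h0 h ((headToHead_seqAppend_of_lt h0 h).1 hth)
    · rw [seqAppend_of_le_of_eq hj le_rfl]
      exact (hjunction h0 (by omega)).1 ((headToHead_seqAppend_self h0).1 hth)
    · rw [seqAppend_of_le h.le]
      exact hw'.collider (i - m) (by omega) (by omega) ((headToHead_seqAppend_of_gt h).1 hth)
  · rcases lt_trichotomy i m with h | rfl | h
    · rw [seqAppend_of_lt h]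
      exact hw.nonCollider i h0 h (mt (headToHead_seqAppend_of_lt h0 h).2 hth)
    · rw [seqAppend_of_le_of_eq hj le_rfl]
      exact (hjunction h0 (by omega)).2 (mt (headToHead_seqAppend_self h0).2 hth)
    · rw [seqAppend_of_le h.le]
      exact hw'.nonCollider (i - m) (by omega) (by omega)
        (mt (headToHead_seqAppend_of_gt h).2 hth)

end IsOpenWalk

section Walks

variable {R : V → V → Prop} {P Q : Set V} {n : ℕ} {j : ℕ → V} {d : ℕ → Bool} {x y : V}

theorem isOpenWalk_zero : IsOpenWalk R P Q 0 j d where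
  isWalk _ hi := absurd hi (Nat.not_lt_zero _)
  collider _ _ hi := absurd hi (Nat.not_lt_zero _)
  nonCollider _ _ hi := absurd hi (Nat.not_lt_zero _)

theorem isOpenWalk_forwardEdge (h : R x y) :
    IsOpenWalk R P Q 1 (seqAppend 1 (fun _ => x) fun _ => y) fun _ => true where
  isWalk i hi := by
    obtain rfl : i = 0 := by omega
    simpa [seqAppend] using h
  collider _ _ _ := by omega
  nonCollider _ _ _ := by omega

theorem isOpenWalk_backwardEdge (h : R y x) :
    IsOpenWalk R P Q 1 (seqAppend 1 (fun _ => x) fun _ => y) fun _ => false where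
  isWalk i hi := by
    obtain rfl : i = 0 := by omega
    simpa [seqAppend] using h
  collider _ _ _ := by omega
  nonCollider _ _ _ := by omega

theorem exists_isOpenWalk_forward (h : ReflTransGen (delOut R Q) x y) :
    ∃ n j, IsOpenWalk (delOut R Q) P Q n j (fun _ => true) ∧ j 0 = x ∧ j n = y := by
  induction h with
  | refl => exact ⟨0, fun _ => x, isOpenWalk_zero, rfl, rfl⟩
  | @tail u v _ huv ih =>
    obtain ⟨n, j, hw, hj0, hjn⟩ := ih
    have hj : j n = seqAppend 1 (fun _ => u) (fun _ => v) 0 := by simp [hjn, seqAppend]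
    refine ⟨n + 1, seqAppend n j (seqAppend 1 (fun _ => u) fun _ => v), ?_, ?_, ?_⟩
    · rw [← seqAppend_const true]
      exact hw.append (isOpenWalk_forwardEdge huv) hj fun _ _ => by simpa [hjn] using huv.2
    · rw [seqAppend_of_le_of_eq hj n.zero_le, hj0]
    · simp [seqAppend]

theorem exists_isOpenWalk_backward (h : ReflTransGen (delOut R Q) x y) :
    ∃ n j, IsOpenWalk (delOut R Q) P Q n j (fun _ => false) ∧ j 0 = y ∧ j n = x := by
  induction h with
  | refl => exact ⟨0, fun _ => x, isOpenWalk_zero, rfl, rfl⟩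
  | @tail u v _ huv ih =>
    obtain ⟨n, j, hw, hj0, hjn⟩ := ih
    have hj : seqAppend 1 (fun _ => v) (fun _ => u) 1 = j 0 := by simp [hj0, seqAppend]
    refine ⟨1 + n, seqAppend 1 (seqAppend 1 (fun _ => v) fun _ => u) j, ?_, ?_, ?_⟩
    · rw [← seqAppend_const false]
      exact (isOpenWalk_backwardEdge huv).append hw hj fun _ _ => by simpa [seqAppend] using huv.2
    · simp [seqAppend]
    · rw [seqAppend_of_le (by omega), Nat.add_sub_cancel_left, hjn]

end Walks

section Closed

variable {R : V → V → Prop} {P Q : Set V} {n : ℕ} {j : ℕ → V} {d : ℕ → Bool}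

theorem IsWalk.exists_collider_or_reach (hw : IsWalk R n j d) {i k : ℕ} (hik : i < k)
    (hkn : k ≤ n) (hdi : d i = true) :
    (∃ t, i < t ∧ t < k ∧ HeadToHead d t ∧ ReflTransGen R (j i) (j t)) ∨
      (d (k - 1) = true ∧ ReflTransGen R (j i) (j k)) := by
  induction k, hik using Nat.le_induction with
  | base => exact Or.inr ⟨hdi, .single ((hw i (by omega)).1 hdi)⟩
  | succ k hk ih =>
    rcases ih (by omega) with ⟨t, hit, htk, hth, hr⟩ | ⟨hdk1, hr⟩
    · exact Or.inl ⟨t, hit, by omega, hth, hr⟩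
    · cases hdk : d k
      · exact Or.inl ⟨k, by omega, by omega, ⟨hdk1, hdk⟩, hr⟩
      · exact Or.inr ⟨hdk, hr.tail ((hw k (by omega)).1 hdk)⟩

namespace IsOpenWalk

theorem forall_mem (hP : ∀ ⦃u v⦄, R u v → v ∈ P → u ∈ P) (hw : IsOpenWalk R P Q n j d)
    (h0 : j 0 ∈ P) (hn : j n ∈ P) : ∀ i ≤ n, j i ∈ P := by
  intro i
  induction i using Nat.strong_induction_on with
  | _ i ih =>
    intro hi
    rcases hi.eq_or_lt with rfl | hi
    · exact hn
    cases hdi : d i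
    · rcases Nat.eq_zero_or_pos i with rfl | h0i
      · exact h0
      cases hdi1 : d (i - 1)
      · have hedge := (hw.isWalk (i - 1) (by omega)).2 hdi1
        rw [Nat.sub_add_cancel h0i] at hedge
        exact hP hedge (ih (i - 1) (by omega) (by omega))
      · exact hw.collider i h0i hi ⟨hdi1, hdi⟩
    · rcases hw.isWalk.exists_collider_or_reach hi le_rfl hdi with
        ⟨t, hit, htn, hth, hr⟩ | ⟨-, hr⟩
      · exact mem_of_reflTransGen hP hr (hw.collider t (by omega) htn hth)
      · exact mem_of_reflTransGen hP hr hn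

theorem splice (hP : ∀ ⦃u v⦄, R u v → v ∈ P → u ∈ P) (hw : IsOpenWalk R P Q n j d) {i k : ℕ}
    (hik : i < k) (hkn : k ≤ n) (hjk : j i = j k) :
    IsOpenWalk R P Q (i + (n - k)) (seqAppend i j fun t => j (t + k))
      (seqAppend i d fun t => d (t + k)) := by
  refine (hw.take (by omega)).append (hw.shift k) (by simpa using hjk) fun h0 hkn' => ?_
  simp only [Nat.zero_add]
  constructor
  · rintro ⟨hd1, hdk⟩
    cases hdi : d i
    · exact hw.collider i h0 (by omega) ⟨hd1, hdi⟩
    -- the cut-out subwalk leaves `j i` forwards; unless it enters `j k` forwards it meets a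
    -- collider that `j i` is an ancestor of
    rcases hw.isWalk.exists_collider_or_reach hik hkn hdi with
      ⟨t, hit, htk, hth, hr⟩ | ⟨hdk1, -⟩
    · exact mem_of_reflTransGen hP hr (hw.collider t (by omega) (by omega) hth)
    · exact hjk ▸ hw.collider k (by omega) (by omega) ⟨hdk1, hdk⟩
  · intro hnot
    cases hd1 : d (i - 1)
    · exact hw.nonCollider i h0 (by omega) fun hth => absurd hth.1 (by simp [hd1])
    · have hdk : d k = true := by simpa [hd1] using hnot
      exact hjk ▸ hw.nonCollider k (by omega) (by omega) fun hth => absurd hth.2 (by simp [hdk])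

end IsOpenWalk

end Closed

namespace IsOpenWalk

variable {R : V → V → Prop} {P Q : Set V} {n N : ℕ} {j : ℕ → V} {d : ℕ → Bool} {s : V}

theorem exists_append_forward (hw : IsOpenWalk R P Q n j d) (hN : N ≤ n) (hz : j N ∉ Q)
    (hpath : ReflTransGen (delOut R Q) (j N) s) :
    ∃ n' j' d', IsOpenWalk R P Q n' j' d' ∧ j' 0 = j 0 ∧ j' n' = s ∧
      ∀ i, N ≤ i → ¬ HeadToHead d' i := by
  obtain ⟨q, y, hy, hy0, hyq⟩ := exists_isOpenWalk_forward (P := P) hpath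
  have hj : j N = y 0 := hy0.symm
  refine ⟨N + q, seqAppend N j y, seqAppend N d fun _ => true,
    (hw.take hN).append (hy.mono (fun _ _ h => h.1) subset_rfl subset_rfl) hj fun _ _ => ?_,
    seqAppend_of_le_of_eq hj N.zero_le, ?_, fun i hi hth => ?_⟩
  · exact ⟨fun h => absurd h.2 (by simp), fun _ => hz⟩
  · rw [seqAppend_of_le (by omega), Nat.add_sub_cancel_left, hyq]
  · simpa [seqAppend_of_le hi] using hth.2

theorem exists_prepend_backward (hw : IsOpenWalk R P Q n j d) (hN : N ≤ n) (hz : j N ∉ Q)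
    (hpath : ReflTransGen (delOut R Q) (j N) s) :
    ∃ n' j' d', IsOpenWalk R P Q n' j' d' ∧ j' 0 = s ∧ j' n' = j n ∧
      ∀ i, 0 < i → i < n' → HeadToHead d' i →
        ∃ t, N < t ∧ t < n ∧ HeadToHead d t ∧ j' i = j t := by
  obtain ⟨q, y, hy, hy0, hyq⟩ := exists_isOpenWalk_backward (P := P) hpath
  have hj : y q = j (0 + N) := by rw [hyq, Nat.zero_add]
  refine ⟨q + (n - N), seqAppend q y fun t => j (t + N), seqAppend q (fun _ => false)
      fun t => d (t + N),
    (hy.mono (fun _ _ h => h.1) subset_rfl subset_rfl).append (hw.shift N) hj fun _ _ => ?_,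
    by rw [seqAppend_of_le_of_eq hj q.zero_le, hy0], ?_, fun i h0 hi hth => ?_⟩
  · exact ⟨fun h => absurd h.1 (by simp), fun _ => hyq ▸ hz⟩
  · rw [seqAppend_of_le (by omega)]
    congr 1
    omega
  · have hqi : q < i := by
      by_contra hiq
      simpa [HeadToHead, seqAppend_of_lt (show i - 1 < q by omega)] using hth.1
    refine ⟨i - q + N, by omega, by omega, ?_, seqAppend_of_le hqi.le⟩
    exact (headToHead_shift (by omega)).1 ((headToHead_seqAppend_of_gt hqi).1 hth)

end IsOpenWalk

def Avoiding (H : V → V → Prop) (C : Set V) : V → V → Prop :=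
  fun x y => H x y ∧ x ∉ C ∧ y ∉ C

section Moral

variable {H : V → V → Prop} {A B C : Set V}

theorem notMem_of_isChain_avoiding {l : List V} (hc : l.IsChain (Avoiding H C))
    (hlen : 2 ≤ l.length) {x : V} (hx : x ∈ l) : x ∉ C := by
  obtain ⟨k, hk, rfl⟩ := List.getElem_of_mem hx
  rw [List.isChain_iff_getElem] at hc
  rcases Nat.lt_or_ge (k + 1) l.length with h | h
  · exact (hc k h).2.1
  · simpa only [show k - 1 + 1 = k by omega] using (hc (k - 1) (by omega)).2.2

theorem uSep_iff_forall_not_reflTransGen (hAB : Disjoint A B) :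
    uSep H A B C ↔ ∀ v ∈ A, ∀ w ∈ B, ¬ ReflTransGen (Avoiding H C) v w := by
  constructor
  · intro hsep v hv w hw hr
    have hne : v ≠ w := fun h => disjoint_left.1 hAB hv (h ▸ hw)
    obtain ⟨l, hc, hnd, hlen, hhd, hlast⟩ := dirPathConn_iff_transGen.2
      ⟨(reflTransGen_iff_eq_or_transGen.1 hr).resolve_left hne.symm, hne⟩
    obtain ⟨c, hcC, hcl⟩ := hsep v hv w hw l ⟨hc.imp fun _ _ h => h.1, hnd, hlen, hhd, hlast⟩
    exact notMem_of_isChain_avoiding hc hlen hcl hcC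
  · rintro h v hv w hw l ⟨hc, -, hlen, hhd, hlast⟩
    by_contra! hl
    have hne : l ≠ [] := List.ne_nil_of_length_pos (by omega)
    have hc' : l.IsChain (Avoiding H C) :=
      hc.imp_of_mem_imp fun a b ha hb hab => ⟨hab, fun h => hl a h ha, fun h => hl b h hb⟩
    have := List.relationReflTransGen_of_exists_isChain l hc' hne
    rw [List.head?_eq_some_head hne] at hhd
    rw [List.getLast?_eq_some_getLast hne] at hlast
    exact h v hv w hw (by simpa [Option.some_inj.1 hhd, Option.some_inj.1 hlast] using this)

end Moral

section MoralWalks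

variable {R : V → V → Prop} {W P Q C : Set V} {n : ℕ} {j : ℕ → V} {d : ℕ → Bool} {x y : V}

theorem mem_of_moralGraph_inducedGraph (h : moralGraph (inducedGraph R W) x y) : x ∈ W := by
  obtain ⟨-, h | h | ⟨c, h, -⟩⟩ := h
  exacts [h.2.1, h.2.2, h.2.1]

theorem reflTransGen_avoiding_moralGraph (hx : x ∈ W) (hy : y ∈ W) (hxC : x ∉ C) (hyC : y ∉ C)
    (h : R x y ∨ R y x ∨ ∃ c ∈ W, R x c ∧ R y c) :
    ReflTransGen (Avoiding (moralGraph (inducedGraph R W)) C) x y := by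
  by_cases hxy : x = y
  · exact hxy ▸ .refl
  refine .single ⟨⟨hxy, ?_⟩, hxC, hyC⟩
  rcases h with h | h | ⟨c, hc, hxc, hyc⟩
  exacts [Or.inl ⟨h, hx, hy⟩, Or.inr (Or.inl ⟨h, hy, hx⟩),
    Or.inr (Or.inr ⟨c, ⟨hxc, hx, hc⟩, ⟨hyc, hy, hc⟩⟩)]

theorem IsOpenWalk.reflTransGen_avoiding (hw : IsOpenWalk R P C n j d) (hW : ∀ i ≤ n, j i ∈ W)
    (h0 : j 0 ∉ C) :
    ∀ i ≤ n, j i ∉ C → ReflTransGen (Avoiding (moralGraph (inducedGraph R W)) C) (j 0) (j i) := by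
  have hedge : ∀ k < n, R (j k) (j (k + 1)) ∨ R (j (k + 1)) (j k) := fun k hk => by
    cases hd : d k
    exacts [Or.inr ((hw.isWalk k hk).2 hd), Or.inl ((hw.isWalk k hk).1 hd)]
  intro i
  induction i using Nat.strong_induction_on with
  | _ i ih =>
    intro hi hiC
    rcases i with _ | k
    · exact .refl
    by_cases hkC : j k ∉ C
    · exact (ih k (by omega) (by omega) hkC).trans <| reflTransGen_avoiding_moralGraph
        (hW k (by omega)) (hW (k + 1) hi) hkC hiC ((hedge k (by omega)).imp id Or.inl)
    rw [not_not] at hkC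
    -- `j k` is a collider in `C`, skipped via the marriage of its neighbours
    rcases k with _ | m
    · exact absurd hkC h0
    obtain ⟨hdm, hdm1⟩ : HeadToHead d (m + 1) :=
      by_contra fun hth => hw.nonCollider (m + 1) (by omega) (by omega) hth hkC
    have hmC : j m ∉ C := by
      rcases m with _ | l
      · exact h0
      · exact hw.nonCollider (l + 1) (by omega) (by omega) fun hth => by simp [hth.2] at hdm
    exact (ih m (by omega) (by omega) hmC).trans <| reflTransGen_avoiding_moralGraph
      (hW m (by omega)) (hW (m + 2) hi) hmC hiC <| Or.inr <| Or.inr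
        ⟨j (m + 1), hW (m + 1) (by omega), (hw.isWalk m (by omega)).1 hdm,
          (hw.isWalk (m + 1) hi).2 hdm1⟩

theorem exists_isOpenWalk_of_moralGraph (h : moralGraph (inducedGraph R W) x y) :
    ∃ n j d, IsOpenWalk R W Q n j d ∧ j 0 = x ∧ j n = y := by
  obtain ⟨-, h | h | ⟨c, hxc, hyc⟩⟩ := h
  · exact ⟨1, _, _, isOpenWalk_forwardEdge h.1, rfl, rfl⟩
  · exact ⟨1, _, _, isOpenWalk_backwardEdge h.1, rfl, rfl⟩
  · refine ⟨1 + 1, _, _, (isOpenWalk_forwardEdge hxc.1).append (isOpenWalk_backwardEdge hyc.1)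
      rfl fun _ _ => ⟨fun _ => hxc.2.2, fun h => absurd ⟨rfl, rfl⟩ h⟩, rfl, rfl⟩

theorem exists_isOpenWalk_of_reflTransGen_avoiding
    (h : ReflTransGen (Avoiding (moralGraph (inducedGraph R W)) C) x y) :
    ∃ n j d, IsOpenWalk R W C n j d ∧ j 0 = x ∧ j n = y := by
  induction h with
  | refl => exact ⟨0, fun _ => x, fun _ => true, isOpenWalk_zero, rfl, rfl⟩
  | @tail u v _ huv ih =>
    obtain ⟨m, j, d, hw, hj0, hjm⟩ := ih
    obtain ⟨n, j', d', hw', hj'0, hj'n⟩ := exists_isOpenWalk_of_moralGraph (Q := C) huv.1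
    have hj : j m = j' 0 := hjm.trans hj'0.symm
    refine ⟨m + n, seqAppend m j j', seqAppend m d d', hw.append hw' hj fun _ _ =>
        ⟨fun _ => hjm ▸ mem_of_moralGraph_inducedGraph huv.1, fun _ => hjm ▸ huv.2.1⟩,
      by rw [seqAppend_of_le_of_eq hj m.zero_le, hj0], ?_⟩
    rw [seqAppend_of_le (by omega), Nat.add_sub_cancel_left, hj'n]

end MoralWalks

def IsConnectingWalk (E : V → V → Prop) (A B C : Set V) (n : ℕ) (j : ℕ → V) (d : ℕ → Bool) :
    Prop :=
  IsOpenWalk (delOut E B) (AnSet E C) C n j d ∧ j 0 ∈ A ∧ j n ∈ B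

section DeltaSeparation

variable {E : V → V → Prop} {A B C : Set V} {n : ℕ} {j : ℕ → V} {d : ℕ → Bool}

theorem AnSet_closed_delOut {S : Set V} :
    ∀ ⦃u v⦄, delOut E B u v → v ∈ AnSet E S → u ∈ AnSet E S :=
  fun _ _ h hv => mem_AnSet_of_rel h.1 hv

theorem IsConnectingWalk.exists_injective (h : IsConnectingWalk E A B C n j d) :
    ∃ n j d, IsConnectingWalk E A B C n j d ∧ ∀ a ≤ n, ∀ b ≤ n, j a = j b → a = b := by
  induction n using Nat.strong_induction_on generalizing j d with
  | _ n ih =>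
    by_cases hinj : ∀ a ≤ n, ∀ b ≤ n, j a = j b → a = b
    · exact ⟨n, j, d, h, hinj⟩
    obtain ⟨i, k, hik, hkn, hjk⟩ : ∃ i k, i < k ∧ k ≤ n ∧ j i = j k := by
      push Not at hinj
      obtain ⟨a, ha, b, hb, hab, hne⟩ := hinj
      rcases hne.lt_or_gt with h | h
      exacts [⟨a, b, h, hb, hab⟩, ⟨b, a, h, ha, hab.symm⟩]
    have hj : j i = (fun t => j (t + k)) 0 := by simpa using hjk
    refine ih (i + (n - k)) (by omega) ⟨h.1.splice AnSet_closed_delOut hik hkn hjk, ?_, ?_⟩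
    · rw [seqAppend_of_le_of_eq hj i.zero_le]
      exact h.2.1
    · rw [seqAppend_of_le (by omega), show i + (n - k) - i + k = n by omega]
      exact h.2.2

/-- The colliders are repaired from the last one backwards: rerouting at the collider `N` creates
no collider at or after `N`. -/
theorem exists_isConnectingWalk_of_isOpenWalk (N : ℕ) :
    ∀ n j d, IsOpenWalk (delOut E B) (AnSet E (A ∪ B ∪ C)) C n j d → j 0 ∈ A → j n ∈ B →
      (∀ i, N ≤ i → 0 < i → i < n → HeadToHead d i → j i ∈ AnSet E C) →
      ∃ n j d, IsConnectingWalk E A B C n j d := by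
  induction N with
  | zero =>
    exact fun n j d hw h0 hn hgood =>
      ⟨n, j, d, ⟨hw.isWalk, fun i => hgood i i.zero_le, hw.nonCollider⟩, h0, hn⟩
  | succ N ih =>
    intro n j d hw h0 hn hgood
    by_cases hbad : 0 < N ∧ N < n ∧ HeadToHead d N ∧ j N ∉ AnSet E C
    swap
    · refine ih n j d hw h0 hn fun i hi h0i hin hth => ?_
      rcases hi.lt_or_eq with hi | rfl
      · exact hgood i hi h0i hin hth
      · by_contra hC
        exact hbad ⟨h0i, hin, hth, hC⟩
    obtain ⟨h0N, hNn, hth, hzC⟩ := hbad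
    obtain ⟨s, hs, hpath⟩ := exists_reflTransGen_delOut (hw.collider N h0N hNn hth)
    have hsC : s ∉ C := fun hsC => hzC <|
      mem_AnSet_of_reflTransGen (ReflTransGen.mono (fun _ _ h => h.1) _ _ hpath) (subset_AnSet hsC)
    have hpath' : ReflTransGen (delOut (delOut E B) C) (j N) s := ReflTransGen.mono (fun _ _ h =>
      ⟨⟨h.1, fun hu => h.2 (Or.inl (Or.inr hu))⟩, fun hu => h.2 (Or.inr hu)⟩) _ _ hpath
    have hzC' : j N ∉ C := fun h => hzC (subset_AnSet h)
    rcases hs with (hsA | hsB) | hsC'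
    · obtain ⟨n', j', d', hw', h0', hn', hcol⟩ := hw.exists_prepend_backward hNn.le hzC' hpath'
      refine ih n' j' d' hw' (h0' ▸ hsA) (hn' ▸ hn) fun i _ h0i hin hth' => ?_
      obtain ⟨t, hNt, htn, htht, hjt⟩ := hcol i h0i hin hth'
      exact hjt ▸ hgood t hNt (by omega) htn htht
    · obtain ⟨n', j', d', hw', h0', hn', hnocol⟩ := hw.exists_append_forward hNn.le hzC' hpath'
      exact ih n' j' d' hw' (h0' ▸ h0) (hn' ▸ hsB) fun i hi _ _ hth' => absurd hth' (hnocol i hi)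
    · exact absurd hsC' hsC

theorem uSep_iff_forall_not_isConnectingWalk (hAB : Disjoint A B) (hAC : Disjoint A C)
    (hBC : Disjoint B C) :
    uSep (moralGraph (inducedGraph (delOut E B) (AnSet E (A ∪ B ∪ C)))) A B C ↔
      ∀ n j d, ¬ IsConnectingWalk E A B C n j d := by
  rw [uSep_iff_forall_not_reflTransGen hAB]
  constructor
  · rintro hsep n j d ⟨hw, h0, hn⟩
    have hw' := hw.mono (fun _ _ h => h) (AnSet_mono (T := A ∪ B ∪ C) subset_union_right)
      subset_rfl
    have hW := hw'.forall_mem AnSet_closed_delOut (subset_AnSet (Or.inl (Or.inl h0)))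
      (subset_AnSet (Or.inl (Or.inr hn)))
    exact hsep _ h0 _ hn (hw'.reflTransGen_avoiding hW (disjoint_left.1 hAC h0) n le_rfl
      (disjoint_left.1 hBC hn))
  · rintro h v hv w hw hr
    obtain ⟨n, j, d, hwalk, rfl, rfl⟩ := exists_isOpenWalk_of_reflTransGen_avoiding hr
    obtain ⟨n, j, d, hc⟩ := exists_isConnectingWalk_of_isOpenWalk n n j d hwalk hv hw
      fun i hi _ hin => absurd hin (by omega)
    exact h n j d hc

theorem exists_isConnectingWalk_of_trail (htr : IsTrail E n j d) (h0 : j 0 ∈ A) (hn : j n ∈ B)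
    (hall : TrailAllowed B n j d) (hnb : ¬ TrailBlocked E n j d C) :
    ∃ m, IsConnectingWalk E A B C m j d := by
  classical
  have hex : ∃ m, m ≤ n ∧ j m ∈ B := ⟨n, le_rfl, hn⟩
  obtain ⟨hmn, hmB⟩ := Nat.find_spec hex
  have hfirst : ∀ i < Nat.find hex, j i ∉ B := fun i hi hiB => Nat.find_min hex hi ⟨by omega, hiB⟩
  refine ⟨Nat.find hex, ⟨fun i hi => ?_, fun i h0i hi hth => ?_, fun i h0i hi hth hiC => ?_⟩,
    h0, hmB⟩
  · have hedge := htr.2.2 i (by omega)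
    exact ⟨fun hd => ⟨hedge.1 hd, hfirst i hi⟩,
      fun hd => ⟨hedge.2 hd, fun hB => (hall i (by omega)).2 hd ⟨hB, hfirst i hi⟩⟩⟩
  · by_contra hA
    exact hnb ⟨i, h0i, by omega, Or.inr ⟨hth, fun h => hA (subset_AnSet h),
      fun w hp hw => hA (Or.inr ⟨fun h => hA (subset_AnSet h), w, hw, hp⟩)⟩⟩
  · exact hnb ⟨i, h0i, by omega, Or.inl ⟨hth, hiC⟩⟩

namespace IsConnectingWalk

theorem not_trailBlocked (h : IsConnectingWalk E A B C n j d) : ¬ TrailBlocked E n j d C := by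
  rintro ⟨i, h0i, hin, ⟨hth, hiC⟩ | ⟨hth, hiC, hdesc⟩⟩
  · exact h.1.nonCollider i h0i hin hth hiC
  · rcases h.1.collider i h0i hin hth with h' | ⟨-, c, hc, hp⟩
    exacts [hiC h', hdesc c hp hc]

theorem trailAllowed (h : IsConnectingWalk E A B C n j d) : TrailAllowed B n j d := fun i hi =>
  ⟨fun hd hB => ((h.1.isWalk i hi).1 hd).2 hB.1, fun hd hB => ((h.1.isWalk i hi).2 hd).2 hB.1⟩

theorem isTrail (hAB : Disjoint A B) (h : IsConnectingWalk E A B C n j d)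
    (hinj : ∀ a ≤ n, ∀ b ≤ n, j a = j b → a = b) : IsTrail E n j d := by
  refine ⟨Nat.one_le_iff_ne_zero.2 fun hn => ?_, hinj, fun i hi => ?_⟩
  · subst hn
    exact disjoint_left.1 hAB h.2.1 h.2.2
  · exact ⟨fun hd => ((h.1.isWalk i hi).1 hd).1, fun hd => ((h.1.isWalk i hi).2 hd).1⟩

end IsConnectingWalk

theorem forall_trailBlocked_iff (hAB : Disjoint A B) :
    (∀ n j d, IsTrail E n j d → j 0 ∈ A → j n ∈ B → TrailAllowed B n j d →
      TrailBlocked E n j d C) ↔ ∀ n j d, ¬ IsConnectingWalk E A B C n j d := by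
  constructor
  · intro h n j d hc
    obtain ⟨n, j, d, hc, hinj⟩ := hc.exists_injective
    exact hc.not_trailBlocked (h n j d (hc.isTrail hAB hinj) hc.2.1 hc.2.2 hc.trailAllowed)
  · intro h n j d htr h0 hn hall
    by_contra hnb
    obtain ⟨m, hc⟩ := exists_isConnectingWalk_of_trail htr h0 hn hall hnb
    exact h m j d hc

end DeltaSeparation

theorem deltaSep_iff_trails_blocked_general (E : V → V → Prop) (A B C : Set V)
    (hAB : Disjoint A B) (hAC : Disjoint A C) (hBC : Disjoint B C) :
    deltaSep E A B C ↔
      ∀ (n : ℕ) (j : ℕ → V) (d : ℕ → Bool), IsTrail E n j d →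
        j 0 ∈ A → j n ∈ B → TrailAllowed B n j d →
          TrailBlocked E n j d C := by
  have hA : A \ (B ∪ C) = A := (disjoint_union_right.2 ⟨hAB, hAC⟩).sdiff_eq_left
  have hC : C \ B = C := hBC.symm.sdiff_eq_left
  rw [forall_trailBlocked_iff hAB, deltaSep, hA, hC, deltaSepDisjoint,
    uSep_iff_forall_not_isConnectingWalk hAB hAC hBC]

/-- Trail condition for δ-separation: for pairwise disjoint `A, B, C`,
`C` δ-separates `A` from `B` iff every allowed trail from `A` to `B` is
blocked by `C`. -/
theorem deltaSep_iff_trails_blocked [Fintype V] (E : V → V → Prop)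
    (hE : ∀ j k, E j k → j ≠ k) (A B C : Set V)
    (hAB : Disjoint A B) (hAC : Disjoint A C) (hBC : Disjoint B C) :
    deltaSep E A B C ↔
      ∀ (n : ℕ) (j : ℕ → V) (d : ℕ → Bool), IsTrail E n j d →
        j 0 ∈ A → j n ∈ B → TrailAllowed B n j d →
          TrailBlocked E n j d C :=
  deltaSep_iff_trails_blocked_general E A B C hAB hAC hBC
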